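/- Let 𝔽_{q₁} be a degree-ℓ field extension of 𝔽_q (so q₁ = q^ℓ), let y₁, …, y_m ∈ 𝔽_{q₁} be distinct with m = m₁ + m₂ (m₁ ≥ 1, m₂ ≥ 0), and let C₁ = {(f(y₁), …, f(y_m)) : f ∈ 𝔽_{q₁}[x], deg f < m₁} be the [m, m₁] Reed–Solomon code over 𝔽_{q₁}. Let 1 ≤ τ ≤ m₂ and m₁ < D ≤ m − τ, and suppose C₁ has the (τ, D)-optimal-repair property over 𝔽_q: for every τ-subset I ⊆ [m] and every D-subset R ⊆ [m]∖I there exist natural numbers (a_j)_{j∈R} with Σ_{j∈R} a_j = τ·D·ℓ/(D − m₁ + τ), functions ψ_j : 𝔽_{q₁} → 𝔽_q^{a_j}, and a decoder recovering (c_j)_{j∈I} from (ψ_j(c_j))_{j∈R} for every c ∈ C₁. Let 𝒜 be the array-form Tamo–Barg code over 𝔽_{q₁} built from y₁, …, y_m (with parameters r ≥ 1, δ ≥ 2, L = r + δ − 1). Then for every τ-subset I ⊆ [m], every family of erasure sets E_i ⊆ [L] with |E_i| = w and δ ≤ w ≤ L for i ∈ I, and every D-subset R ⊆ [m]∖I,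 there exist natural numbers (b_j)_{j∈R} with Σ_{j∈R} b_j = τ·D·ℓ·(w − δ + 1)/(D − m₁ + τ), functions φ_j : 𝔽_{q₁}^L → 𝔽_q^{b_j}, and a function Φ recovering, for every codeword of 𝒜, all erased entries ((A_i)|_{E_i})_{i∈I} from the messages (φ_j(A_j))_{j∈R} together with the surviving entries ((A_i)|_{[L]∖E_i})_{i∈I}. -/

import Mathlib

/-! Write `G = ∑_{k < m₁} d_k h^k` in base `h`. Reducing modulo `h - y_t` turns `G` into the
local polynomial `g_t = ∑_k y_t^k d_k`, whose evaluations at the roots `β_t` of `h - y_t` form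
column `t`. Hence for every `s` the `s`-th coefficients `(coeff s g_t)_t` form a codeword of the
Reed–Solomon code `C₁`, and the locality condition on the first `m₁` columns forces these codewords
to vanish for `s ≥ r`, i.e. `deg g_t < r`. A helper node `j` recovers `g_j` by interpolation and
runs the repair scheme of `C₁` on the `w - δ + 1` coefficients of degrees `L - w, …, r - 1`; this
yields the top coefficients of each damaged `g_i`, and the rest of `g_i`, of degree `< L - w`, is
interpolated from the `L - w` surviving entries of column `i`. -/

open Polynomial

/-- The array-form Tamo–Barg code (Construction 2 of the paper). -/
def TBArrayCode {F : Type*} [Field F] (m m₁ L r : ℕ)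
    (y : Fin m → F) (h : F[X]) (β : Fin m → Fin L → F) :
    Set (Fin m → Fin L → F) :=
  {A | ∃ G : F[X], G.degree < ((m₁ * L : ℕ) : WithBot ℕ) ∧
    (∀ t : Fin m, (t : ℕ) < m₁ →
      (G % (h - C (y t))).degree < ((r : ℕ) : WithBot ℕ)) ∧
    A = fun t j => G.eval (β t j)}

namespace Polynomial

section Ring

variable {R : Type*} [Ring R]

theorem degree_sub_sum_Ico_lt {p : R[X]} {e r : ℕ} (hp : p.degree < r) :
    (p - ∑ s ∈ Finset.Ico e r, C (p.coeff s) * X ^ s).degree < e := by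
  rw [degree_lt_iff_coeff_zero]
  intro n hn
  simp only [coeff_sub, finsetSum_coeff, coeff_C_mul_X_pow]
  rw [Finset.sum_ite_eq]
  split_ifs with hnr
  · exact sub_self _
  · rw [Finset.mem_Ico] at hnr
    have hrn : (r : WithBot ℕ) ≤ n := by exact_mod_cast (by omega : r ≤ n)
    rw [coeff_eq_zero_of_degree_lt (hp.trans_le hrn), sub_zero]

theorem degree_sub_sum_fin_lt {p : R[X]} {e W : ℕ} (hp : p.degree < (e + W : ℕ)) :
    (p - ∑ u : Fin W, C (p.coeff (e + u)) * X ^ (e + u : ℕ)).degree < e := by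
  have hIco := Finset.sum_Ico_eq_sum_range (fun s => C (p.coeff s) * X ^ s) e (e + W)
  rw [Nat.add_sub_cancel_left] at hIco
  rw [Fin.sum_univ_eq_sum_range (fun u => C (p.coeff (e + u)) * X ^ (e + u)), ← hIco]
  exact degree_sub_sum_Ico_lt hp

end Ring

variable {F : Type*} [Field F]

theorem degree_div_lt_mul_natDegree {G h : F[X]} (hh : h ≠ 0) {n : ℕ}
    (hG : G.degree < ((n + 1) * h.natDegree : ℕ)) :
    (G / h).degree < (n * h.natDegree : ℕ) := by
  by_cases hQ : G / h = 0
  · rw [hQ, degree_zero]; exact WithBot.bot_lt_coe _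
  have hhG : h.degree ≤ G.degree :=
    not_lt.1 fun hlt => hQ ((Polynomial.div_eq_zero_iff hh).2 hlt)
  have hG0 : G ≠ 0 := by rintro rfl; simp at hQ
  have hsum := degree_add_div hh hhG
  rw [degree_eq_natDegree hh, degree_eq_natDegree hQ, degree_eq_natDegree hG0] at hsum
  rw [degree_eq_natDegree hG0] at hG
  rw [degree_eq_natDegree hQ]
  have := hsum ▸ hG
  norm_cast at this ⊢
  rw [add_one_mul] at this
  omega

theorem exists_sum_mul_pow_of_degree_lt {h : F[X]} (hh : h ≠ 0) :
    ∀ (n : ℕ) (G : F[X]), G.degree < (n * h.natDegree : ℕ) →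
      ∃ d : Fin n → F[X], (∀ k, (d k).degree < h.degree) ∧ G = ∑ k, d k * h ^ (k : ℕ)
  | 0, G, hG => ⟨Fin.elim0, fun k => k.elim0, by simpa using hG⟩
  | n + 1, G, hG => by
    obtain ⟨d, hd, hQ⟩ := exists_sum_mul_pow_of_degree_lt hh n (G / h)
      (degree_div_lt_mul_natDegree hh hG)
    refine ⟨Fin.cons (G % h) d, Fin.cases (degree_mod_lt G hh) hd, ?_⟩
    rw [Fin.sum_univ_succ]
    simp only [Fin.cons_zero, Fin.cons_succ, Fin.val_zero, pow_zero, mul_one, Fin.val_succ,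
      pow_succ]
    conv_lhs => rw [← EuclideanDomain.mod_add_div G h, hQ, Finset.mul_sum]
    congr 1
    exact Finset.sum_congr rfl fun k _ => by ring

theorem sum_mul_pow_mod_sub_C {n : ℕ} {h : F[X]} (hh : 0 < h.degree) {d : Fin n → F[X]}
    (hd : ∀ k, (d k).degree < h.degree) (z : F) :
    (∑ k, d k * h ^ (k : ℕ)) % (h - C z) = ∑ k : Fin n, z ^ (k : ℕ) • d k := by
  have hdeg : (h - C z).degree = h.degree :=
    degree_sub_eq_left_of_degree_lt (degree_C_le.trans_lt hh)
  have hdvd : h - C z ∣ ∑ k, d k * h ^ (k : ℕ) - ∑ k : Fin n, z ^ (k : ℕ) • d k := by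
    rw [← Finset.sum_sub_distrib]
    refine Finset.dvd_sum fun k _ => ?_
    rw [smul_eq_C_mul, C_pow, mul_comm, ← sub_mul]
    exact (sub_dvd_pow_sub_pow h (C z) k).mul_right _
  rw [mod_eq_of_dvd_sub hdvd, mod_eq_self_iff (ne_zero_of_degree_gt (hdeg ▸ hh)), hdeg]
  exact (degree_sum_le _ _).trans_lt <| (Finset.sup_lt_iff (bot_lt_of_lt hh)).2 fun k _ =>
    (degree_smul_le _ _).trans_lt (hd k)

theorem eval_mod_of_eval_eq_zero (G : F[X]) {q : F[X]} {x : F} (hx : q.eval x = 0) :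
    (G % q).eval x = G.eval x := by
  simp [EuclideanDomain.mod_eq_sub_mul_div, hx]

theorem eq_add_interpolate {ι : Type*} [DecidableEq ι] {p q : F[X]} {s : Finset ι} {v : ι → F}
    (hvs : Set.InjOn v s) (hpq : (p - q).degree < s.card) :
    p = q + Lagrange.interpolate s v (fun i => p.eval (v i) - q.eval (v i)) := by
  rw [eq_comm, ← eq_sub_iff_add_eq']
  exact (Lagrange.eq_interpolate_of_eval_eq _ hvs hpq fun i _ => eval_sub p q (v i)).symm

end Polynomial

section Codes

variable {F : Type*} [Field F] {ι κ : Type*}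

def reedSolomonCode (k : ℕ) (y : ι → F) : Set (ι → F) :=
  {c | ∃ f : F[X], f.degree < k ∧ c = fun j => f.eval (y j)}

theorem reedSolomonCode.eq_zero_of_eq_zero_on {k : ℕ} {y : ι → F} {c : ι → F}
    (hc : c ∈ reedSolomonCode k y) {S : Finset ι} (hyS : Set.InjOn y S) (hkS : k ≤ S.card)
    (hcS : ∀ t ∈ S, c t = 0) : c = 0 := by
  obtain ⟨f, hf, rfl⟩ := hc
  have hf0 : f = 0 := eq_zero_of_degree_lt_of_eval_index_eq_zero S hyS
    (hf.trans_le (by exact_mod_cast hkS)) hcS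
  funext t
  simp [hf0]

theorem coeff_sum_pow_smul_mem_reedSolomonCode {n : ℕ} (y : ι → F) (d : Fin n → F[X])
    (s : ℕ) :
    (fun t => (∑ k : Fin n, y t ^ (k : ℕ) • d k).coeff s) ∈ reedSolomonCode n y := by
  refine ⟨∑ k : Fin n, C ((d k).coeff s) * X ^ (k : ℕ), degree_sum_fin_lt _, ?_⟩
  funext t
  simp only [finsetSum_coeff, coeff_smul, smul_eq_mul, eval_finsetSum, eval_mul, eval_C,
    eval_pow, eval_X]
  exact Finset.sum_congr rfl fun k _ => mul_comm _ _

def coeffArrayCode (𝒞 : Set (ι → F)) (r : ℕ) (β : ι → κ → F) : Set (ι → κ → F) :=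
  {A | ∃ g : ι → F[X], (∀ t, (g t).degree < r) ∧ (∀ s, (fun t => (g t).coeff s) ∈ 𝒞) ∧
    A = fun t p => (g t).eval (β t p)}

end Codes

theorem TBArrayCode_subset_coeffArrayCode {F : Type*} [Field F] {m m₁ L r : ℕ}
    (hm : m₁ ≤ m) (hL : 0 < L) {y : Fin m → F} (hy : Function.Injective y) {h : F[X]}
    (hdeg : h.degree = L) {β : Fin m → Fin L → F}
    (hβroot : ∀ (i : Fin m) (j : Fin L), h.eval (β i j) = y i) :
    TBArrayCode m m₁ L r y h β ⊆ coeffArrayCode (reedSolomonCode m₁ y) r β := by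
  rintro _ ⟨G, hG, hGmod, rfl⟩
  have hh : 0 < h.degree := by rw [hdeg]; exact_mod_cast hL
  obtain ⟨d, hd, rfl⟩ := exists_sum_mul_pow_of_degree_lt (ne_zero_of_degree_gt hh) m₁ G
    (by rwa [natDegree_eq_of_degree_eq_some hdeg])
  set g : Fin m → F[X] := fun t => ∑ k : Fin m₁, y t ^ (k : ℕ) • d k
  have hmod : ∀ t, (∑ k, d k * h ^ (k : ℕ)) % (h - C (y t)) = g t := fun t =>
    sum_mul_pow_mod_sub_C hh hd (y t)
  have hRS := coeff_sum_pow_smul_mem_reedSolomonCode y d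
  have hgr : ∀ t, (g t).degree < r := by
    intro t
    rw [degree_lt_iff_coeff_zero]
    intro s hs
    have hlocal : ∀ u ∈ Finset.univ.filter fun u : Fin m => (u : ℕ) < m₁, (g u).coeff s = 0 := by
      intro u hu
      have hsr : (r : WithBot ℕ) ≤ s := by exact_mod_cast hs
      exact coeff_eq_zero_of_degree_lt
        ((hmod u ▸ hGmod u (Finset.mem_filter.1 hu).2).trans_le hsr)
    exact congrFun (reedSolomonCode.eq_zero_of_eq_zero_on (hRS s) hy.injOn
      (by rw [Fin.card_filter_val_lt, min_eq_right hm]) hlocal) t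
  refine ⟨g, hgr, hRS, ?_⟩
  funext t p
  rw [← hmod, eval_mod_of_eval_eq_zero _ (by rw [eval_sub, eval_C, hβroot, sub_self])]

theorem coeffArrayCode.exists_partial_repair {F : Type*} [Field F] {ι κ α : Type*}
    [Fintype κ] [DecidableEq κ] {𝒞 : Set (ι → F)} {r e W : ℕ} (herW : e + W = r)
    (hr : r ≤ Fintype.card κ) {β : ι → κ → F} (hβ : ∀ t, Function.Injective (β t))
    {I R : Finset ι} {a : ι → ℕ} (ψ : (j : ι) → F → Fin (a j) → α)
    (dec : ((j : R) → Fin (a j) → α) → (I → F))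
    (hdec : ∀ c ∈ 𝒞, (fun i : I => c i) = dec (fun j => ψ j (c j)))
    {E : ι → Finset κ} (hE : ∀ i ∈ I, (E i)ᶜ.card = e) :
    ∃ φ : (j : ι) → (κ → F) → Fin (W * a j) → α,
    ∃ Φ : ((j : R) → Fin (W * a j) → α) → ((i : I) → {p : κ // p ∉ E i} → F) →
        (i : I) → E i → F,
      ∀ A ∈ coeffArrayCode 𝒞 r β,
        (fun (i : I) (p : E i) => A i p) = Φ (fun j => φ j (A j)) (fun i p => A i p) := by
  let high : (Fin W → F) → F[X] := fun c => ∑ u, C (c u) * X ^ (e + u : ℕ)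
  refine ⟨fun j v x => ψ j ((Lagrange.interpolate Finset.univ (β j) v).coeff
      (e + (finProdFinEquiv.symm x).1)) (finProdFinEquiv.symm x).2,
    fun msgs surv i =>
      let q := high fun u => dec (fun j t => msgs j (finProdFinEquiv (u, t))) i
      -- the junk value `0` off `(E i)ᶜ` is never read by the interpolation
      fun p => (q + Lagrange.interpolate (E i)ᶜ (β i)
        (fun k => if hk : k ∉ E i then surv i ⟨k, hk⟩ - q.eval (β i k) else 0)).eval (β i p),
    ?_⟩
  rintro _ ⟨g, hgr, hgC, rfl⟩
  have hrecover :
      ∀ j, Lagrange.interpolate Finset.univ (β j) (fun p => (g j).eval (β j p)) = g j :=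
    fun j => (Lagrange.eq_interpolate (hβ j).injOn (by
      rw [Finset.card_univ]; exact (hgr j).trans_le (by exact_mod_cast hr))).symm
  have hdecode : ∀ u : Fin W,
      dec (fun j t => ψ j ((g j).coeff (e + u)) t) = fun i : I => (g i).coeff (e + u) :=
    fun u => (hdec _ (hgC (e + u))).symm
  funext i p
  simp only [Equiv.symm_apply_apply, hrecover, hdecode]
  rw [Lagrange.interpolate_eq_of_values_eq_on _ _ fun k hk => dif_pos (Finset.mem_compl.1 hk),
    ← eq_add_interpolate (hβ i).injOn
      (by rw [hE i i.2]; exact degree_sub_sum_fin_lt (herW ▸ hgr i))]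

theorem tamo_barg_partial_repair_from_RS_optimal_repair_general
    (F : Type*) [Field F]
    (K : Subfield F) (ℓ : ℕ)
    (m m₁ m₂ r δ L : ℕ)
    (hm : m = m₁ + m₂) (hδ : 2 ≤ δ) (hL : L + 1 = r + δ)
    (y : Fin m → F) (hy : Function.Injective y)
    (τ D : ℕ)
    -- the `(τ, D)`-optimal-repair property of `C₁ = {(f(y₁), …, f(y_m)) : deg f < m₁}`:
    (hopt : ∀ I : Finset (Fin m), I.card = τ → ∀ R : Finset (Fin m), R.card = D →
      Disjoint I R →
      ∃ a : Fin m → ℕ,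
        (∑ j ∈ R, a j) * (D - m₁ + τ) = τ * D * ℓ ∧
        ∃ ψ : (j : Fin m) → F → (Fin (a j) → ↥K),
        ∃ dec : ((j : ↥R) → (Fin (a (j : Fin m)) → ↥K)) → (↥I → F),
          ∀ c : Fin m → F, (∃ f : F[X], f.degree < ((m₁ : ℕ) : WithBot ℕ) ∧
              c = fun j => f.eval (y j)) →
            (fun i : ↥I => c i.1) = dec (fun j => ψ (j : Fin m) (c j.1)))
    (h : F[X]) (hdeg : h.degree = ((L : ℕ) : WithBot ℕ))
    (β : Fin m → Fin L → F)
    (hβinj : ∀ i : Fin m, Function.Injective (β i))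
    (hβroot : ∀ (i : Fin m) (j : Fin L), h.eval (β i j) = y i) :
    ∀ I : Finset (Fin m), I.card = τ →
    ∀ (wE : ℕ) (E : Fin m → Finset (Fin L)), (∀ i ∈ I, (E i).card = wE) →
      δ ≤ wE → wE ≤ L →
    ∀ R : Finset (Fin m), R.card = D → Disjoint I R →
      ∃ b : Fin m → ℕ,
        (∑ j ∈ R, b j) * (D - m₁ + τ) = τ * D * ℓ * (wE - δ + 1) ∧
        ∃ φ : (j : Fin m) → (Fin L → F) → (Fin (b j) → ↥K),
        ∃ Φ : ((j : ↥R) → (Fin (b (j : Fin m)) → ↥K)) →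
              ((i : ↥I) → ({p : Fin L // p ∉ E i.1} → F)) →
              ((i : ↥I) → (↥(E i.1) → F)),
          ∀ A ∈ TBArrayCode m m₁ L r y h β,
            (fun (i : ↥I) (p : ↥(E i.1)) => A i.1 p.1) =
              Φ (fun j => φ (j : Fin m) (A j.1)) (fun i p => A i.1 p.1) := by
  intro I hI wE E hE hδw hwL R hR hIR
  obtain ⟨a, ha, ψ, dec, hdec⟩ := hopt I hI R hR hIR
  obtain ⟨φ, Φ, hΦ⟩ := coeffArrayCode.exists_partial_repair (r := r) (e := L - wE) (W := wE - δ + 1)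
    (by omega) (by rw [Fintype.card_fin]; omega) hβinj ψ dec hdec
    (fun i hi => by rw [Finset.card_compl, hE i hi, Fintype.card_fin])
  refine ⟨fun j => (wE - δ + 1) * a j, ?_, φ, Φ, fun A hA => hΦ A ?_⟩
  · rw [← Finset.mul_sum, mul_assoc, ha, mul_comm]
  · exact TBArrayCode_subset_coeffArrayCode (by omega) (by omega) hy hdeg hβroot hA

/-- Lemma 5 of the paper. If the `[m, m₁]` Reed–Solomon code `C₁` over
`𝔽_{q₁}` (a degree-`ℓ` extension of `𝔽_q`, realized as the subfield `K` of `F = 𝔽_{q₁}`)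
has the `(τ, D)`-optimal-repair property (total download `τ·D·ℓ/(D - m₁ + τ)` symbols of
`𝔽_q`; stated multiplicatively to avoid division), then for the array-form Tamo–Barg code
over `𝔽_{q₁}`, any `τ` columns each suffering `w` erasures (`δ ≤ w ≤ L`) can be repaired
from any `D` other columns with total download `τ·D·ℓ·(w - δ + 1)/(D - m₁ + τ)` symbols
of `𝔽_q`, using in addition the surviving entries of the erased columns. -/
theorem tamo_barg_partial_repair_from_RS_optimal_repair
    (F : Type*) [Field F] [Fintype F]
    (K : Subfield F) (ℓ : ℕ) (hℓ : Nat.card F = Nat.card K ^ ℓ)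
    (m m₁ m₂ r δ L : ℕ)
    (hm : m = m₁ + m₂) (hm₁ : 1 ≤ m₁) (hr : 1 ≤ r) (hδ : 2 ≤ δ) (hL : L + 1 = r + δ)
    (y : Fin m → F) (hy : Function.Injective y)
    (τ D : ℕ) (hτ1 : 1 ≤ τ) (hτm₂ : τ ≤ m₂) (hm₁D : m₁ < D) (hDm : D + τ ≤ m)
    -- the `(τ, D)`-optimal-repair property of `C₁ = {(f(y₁), …, f(y_m)) : deg f < m₁}`:
    (hopt : ∀ I : Finset (Fin m), I.card = τ → ∀ R : Finset (Fin m), R.card = D →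
      Disjoint I R →
      ∃ a : Fin m → ℕ,
        (∑ j ∈ R, a j) * (D - m₁ + τ) = τ * D * ℓ ∧
        ∃ ψ : (j : Fin m) → F → (Fin (a j) → ↥K),
        ∃ dec : ((j : ↥R) → (Fin (a (j : Fin m)) → ↥K)) → (↥I → F),
          ∀ c : Fin m → F, (∃ f : F[X], f.degree < ((m₁ : ℕ) : WithBot ℕ) ∧
              c = fun j => f.eval (y j)) →
            (fun i : ↥I => c i.1) = dec (fun j => ψ (j : Fin m) (c j.1)))
    (h : F[X]) (hdeg : h.degree = ((L : ℕ) : WithBot ℕ))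
    (β : Fin m → Fin L → F)
    (hβinj : ∀ i : Fin m, Function.Injective (β i))
    (hβroot : ∀ (i : Fin m) (j : Fin L), h.eval (β i j) = y i) :
    ∀ I : Finset (Fin m), I.card = τ →
    ∀ (wE : ℕ) (E : Fin m → Finset (Fin L)), (∀ i ∈ I, (E i).card = wE) →
      δ ≤ wE → wE ≤ L →
    ∀ R : Finset (Fin m), R.card = D → Disjoint I R →
      ∃ b : Fin m → ℕ,
        (∑ j ∈ R, b j) * (D - m₁ + τ) = τ * D * ℓ * (wE - δ + 1) ∧
        ∃ φ : (j : Fin m) → (Fin L → F) → (Fin (b j) → ↥K),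
        ∃ Φ : ((j : ↥R) → (Fin (b (j : Fin m)) → ↥K)) →
              ((i : ↥I) → ({p : Fin L // p ∉ E i.1} → F)) →
              ((i : ↥I) → (↥(E i.1) → F)),
          ∀ A ∈ TBArrayCode m m₁ L r y h β,
            (fun (i : ↥I) (p : ↥(E i.1)) => A i.1 p.1) =
              Φ (fun j => φ (j : Fin m) (A j.1)) (fun i p => A i.1 p.1) :=
  tamo_barg_partial_repair_from_RS_optimal_repair_general F K ℓ m m₁ m₂ r δ L hm hδ hL y hy τ D hopt
    h hdeg β hβinj hβroot
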